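/- arXiv:0909.1987 — 5 statements merged into one kernel-verified Lean document; each statement's English description precedes it below -/
import Mathlib

section
/- For the Painlevé I equation, with P = 6y² + x, Q = R = S = 0, Θ = -y/12, θ¹ = -1/12, θ² = 0, φ₁ = φ₂ = 0, the pseudoinvariant L = θ¹θ²(θ¹_x - θ²_y) + (θ²)²θ¹_y - (θ¹)²θ²_x - P(θ¹)³ - 3Q(θ¹)²θ² - 3Rθ¹(θ²)² - S(θ²)³ - Θ²/2 equals x/12³ = x/1728, and the pseudoinvariant L₁ = L_x·θ¹ + L_y·θ² - 4L(φ₁θ¹ + φ₂θ²) equals the constant -1/12⁴ = -1/20736. Consequently the invariants I₁ = L₁⁴/L⁵ and I₂ = Θ²/L satisfy I₁ = 1/(12x⁵) and I₂ = 12y²/x for x ≠ 0. -/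
noncomputable def pdx (f : ℝ → ℝ → ℝ) (x y : ℝ) : ℝ := deriv (fun t => f t y) x
noncomputable def pdy (f : ℝ → ℝ → ℝ) (x y : ℝ) : ℝ := deriv (fun t => f x t) y

/-- for Painlevé I, L = x/1728, L₁ = -1/20736, and for x ≠ 0 the invariants
are I₁ = L₁⁴/L⁵ = 1/(12x⁵) and I₂ = Θ²/L = 12y²/x. -/
theorem stmt6 (P Q R S Θ θ₁ θ₂ φ₁ φ₂ L L₁ : ℝ → ℝ → ℝ)
    (hP : ∀ x y, P x y = 6 * y ^ 2 + x) (hQ : ∀ x y, Q x y = 0)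
    (hR : ∀ x y, R x y = 0) (hS : ∀ x y, S x y = 0)
    (hΘ : ∀ x y, Θ x y = -y / 12)
    (hθ₁ : ∀ x y, θ₁ x y = -1 / 12) (hθ₂ : ∀ x y, θ₂ x y = 0)
    (hφ₁ : ∀ x y, φ₁ x y = 0) (hφ₂ : ∀ x y, φ₂ x y = 0)
    (hL : ∀ x y, L x y = θ₁ x y * θ₂ x y * (pdx θ₁ x y - pdy θ₂ x y)
      + (θ₂ x y) ^ 2 * pdy θ₁ x y - (θ₁ x y) ^ 2 * pdx θ₂ x y
      - P x y * (θ₁ x y) ^ 3 - 3 * Q x y * (θ₁ x y) ^ 2 * θ₂ x y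
      - 3 * R x y * θ₁ x y * (θ₂ x y) ^ 2 - S x y * (θ₂ x y) ^ 3 - (Θ x y) ^ 2 / 2)
    (hL₁ : ∀ x y, L₁ x y = pdx L x y * θ₁ x y + pdy L x y * θ₂ x y
      - 4 * L x y * (φ₁ x y * θ₁ x y + φ₂ x y * θ₂ x y)) :
    (∀ x y, L x y = x / 1728) ∧ (∀ x y, L₁ x y = -1 / 20736) ∧
    (∀ x y : ℝ, x ≠ 0 →
      (L₁ x y) ^ 4 / (L x y) ^ 5 = 1 / (12 * x ^ 5) ∧
      (Θ x y) ^ 2 / L x y = 12 * y ^ 2 / x) := by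
  have hLv : ∀ x y, L x y = x / 1728 := by
    intro x y
    have h1 : pdx θ₂ x y = 0 := by
      simp [pdx, funext fun t => hθ₂ t y]
    have h2 : pdx θ₁ x y = 0 := by
      simp [pdx, funext fun t => hθ₁ t y]
    have h3 : pdy θ₁ x y = 0 := by
      simp [pdy, funext fun t => hθ₁ x t]
    have h4 : pdy θ₂ x y = 0 := by
      simp [pdy, funext fun t => hθ₂ x t]
    rw [hL, h1, h2, h3, h4, hP, hQ, hR, hS, hΘ, hθ₁, hθ₂]
    ring
  refine ⟨hLv, ?_, ?_⟩
  · intro x y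
    have h1 : pdx L x y = 1 / 1728 := by
      have : (fun t => L t y) = fun t : ℝ => t / 1728 := funext fun t => hLv t y
      simp [pdx, this]
    have h2 : pdy L x y = 0 := by
      have : (fun t => L x t) = fun _ : ℝ => x / 1728 := funext fun t => hLv x t
      simp [pdy, this]
    rw [hL₁, h1, h2, hθ₁, hθ₂, hφ₁, hφ₂]
    ring
  · intro x y hx
    have hL1 : L₁ x y = -1 / 20736 := by
      have h1 : pdx L x y = 1 / 1728 := by
        have : (fun t => L t y) = fun t : ℝ => t / 1728 := funext fun t => hLv t y
        simp [pdx, this]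
      have h2 : pdy L x y = 0 := by
        have : (fun t => L x t) = fun _ : ℝ => x / 1728 := funext fun t => hLv x t
        simp [pdy, this]
      rw [hL₁, h1, h2, hθ₁, hθ₂, hφ₁, hφ₂]
      ring
    rw [hL1, hLv, hΘ]
    constructor
    · field_simp
      ring
    · field_simp
      ring
end

section
/- Let y : I → ℝ be a smooth function on an open interval with x > 0 and sin(y(x)) > 0 for all x ∈ I. Define ψ(x) = x·sin(y(x)) and φ(x) = x·cos(y(x)), and suppose ψ'(x) ≠ 0 on I. Let w be a smooth function with w(ψ(x)) = φ(x) for all x ∈ I. Then y satisfies the equation y'' = -sin³y·(6x·cos²y + sin y) + (1/x)(-18x³cos³y·sin²y - 3x²sin³y·cos y - 2)·y' - (18x³cos⁴y·sin y + 3x²sin²y·cos²y)·y'² - (6x⁴cos⁵y + x³sin y·cos³y + x)·y'³ on I if and only if w''(ψ(x)) = 6·w(ψ(x))² + ψ(x) for all x ∈ I. -/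
open Real
open scoped ContDiff

private lemma keylem (x s c p q A B : ℝ) (hx : x ≠ 0) (hsc : s ^ 2 + c ^ 2 = 1)
    (hD : s + x * (c * p) ≠ 0)
    (h1 : A * (s + x * (c * p)) = c - x * (s * p))
    (h2 : B * (s + x * (c * p)) ^ 2 + A * (2 * (c * p) - x * (s * p ^ 2) + x * (c * q))
        = -(2 * (s * p)) - x * (c * p ^ 2) - x * (s * q)) :
    (q = -s ^ 3 * (6 * x * c ^ 2 + s)
        + (1 / x) * (-18 * x ^ 3 * c ^ 3 * s ^ 2 - 3 * x ^ 2 * s ^ 3 * c - 2) * p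
        - (18 * x ^ 3 * c ^ 4 * s + 3 * x ^ 2 * s ^ 2 * c ^ 2) * p ^ 2
        - (6 * x ^ 4 * c ^ 5 + x ^ 3 * s * c ^ 3 + x) * p ^ 3)
      ↔ B = 6 * (x * c) ^ 2 + x * s := by
  have hD3 : (s + x * (c * p)) ^ 3 ≠ 0 := pow_ne_zero _ hD
  have hxr : x * (-s ^ 3 * (6 * x * c ^ 2 + s)
        + (1 / x) * (-18 * x ^ 3 * c ^ 3 * s ^ 2 - 3 * x ^ 2 * s ^ 3 * c - 2) * p
        - (18 * x ^ 3 * c ^ 4 * s + 3 * x ^ 2 * s ^ 2 * c ^ 2) * p ^ 2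
        - (6 * x ^ 4 * c ^ 5 + x ^ 3 * s * c ^ 3 + x) * p ^ 3)
      = x * (-s ^ 3 * (6 * x * c ^ 2 + s))
        + (-18 * x ^ 3 * c ^ 3 * s ^ 2 - 3 * x ^ 2 * s ^ 3 * c - 2) * p
        - x * ((18 * x ^ 3 * c ^ 4 * s + 3 * x ^ 2 * s ^ 2 * c ^ 2) * p ^ 2)
        - x * ((6 * x ^ 4 * c ^ 5 + x ^ 3 * s * c ^ 3 + x) * p ^ 3) := by
    field_simp
  have hq : (q = -s ^ 3 * (6 * x * c ^ 2 + s)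
        + (1 / x) * (-18 * x ^ 3 * c ^ 3 * s ^ 2 - 3 * x ^ 2 * s ^ 3 * c - 2) * p
        - (18 * x ^ 3 * c ^ 4 * s + 3 * x ^ 2 * s ^ 2 * c ^ 2) * p ^ 2
        - (6 * x ^ 4 * c ^ 5 + x ^ 3 * s * c ^ 3 + x) * p ^ 3)
      ↔ x * q = x * (-s ^ 3 * (6 * x * c ^ 2 + s))
        + (-18 * x ^ 3 * c ^ 3 * s ^ 2 - 3 * x ^ 2 * s ^ 3 * c - 2) * p
        - x * ((18 * x ^ 3 * c ^ 4 * s + 3 * x ^ 2 * s ^ 2 * c ^ 2) * p ^ 2)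
        - x * ((6 * x ^ 4 * c ^ 5 + x ^ 3 * s * c ^ 3 + x) * p ^ 3) := by
    rw [← hxr]
    exact (mul_right_inj' hx).symm
  rw [hq]
  constructor
  · intro h
    have h4 : (B - (6 * (x * c) ^ 2 + x * s)) * (s + x * (c * p)) ^ 3 = 0 := by
      linear_combination (s + x * (c * p)) * h2
        - (2 * (c * p) - x * (s * p ^ 2) + x * (c * q)) * h1
        + (-2 * p - x * q - x ^ 2 * p ^ 3) * hsc - h
    rcases mul_eq_zero.mp h4 with h5 | h5
    · linarith [sub_eq_zero.mp h5]
    · exact absurd h5 hD3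
  · intro h
    linear_combination (s + x * (c * p)) * h2
      - (2 * (c * p) - x * (s * p ^ 2) + x * (c * q)) * h1
      + (-2 * p - x * q - x ^ 2 * p ^ 3) * hsc
      - (s + x * (c * p)) ^ 3 * h

/-- the equation of Example 1 is point-equivalent to Painlevé I
under x̃ = x·sin y, ỹ = x·cos y. -/
theorem stmt8 (I : Set ℝ) (hI : IsOpen I) (hconn : I.OrdConnected)
    (y w : ℝ → ℝ) (hy : ContDiffOn ℝ (⊤ : ℕ∞) y I) (hw : ContDiff ℝ (⊤ : ℕ∞) w)
    (hpos : ∀ x ∈ I, 0 < x ∧ 0 < Real.sin (y x))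
    (ψ φ : ℝ → ℝ)
    (hψ : ∀ x, ψ x = x * Real.sin (y x)) (hφ : ∀ x, φ x = x * Real.cos (y x))
    (hψ' : ∀ x ∈ I, deriv ψ x ≠ 0)
    (hwψ : ∀ x ∈ I, w (ψ x) = φ x) :
    (∀ x ∈ I, deriv (deriv y) x =
        -Real.sin (y x) ^ 3 * (6 * x * Real.cos (y x) ^ 2 + Real.sin (y x))
        + (1 / x) * (-18 * x ^ 3 * Real.cos (y x) ^ 3 * Real.sin (y x) ^ 2
            - 3 * x ^ 2 * Real.sin (y x) ^ 3 * Real.cos (y x) - 2) * deriv y x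
        - (18 * x ^ 3 * Real.cos (y x) ^ 4 * Real.sin (y x)
            + 3 * x ^ 2 * Real.sin (y x) ^ 2 * Real.cos (y x) ^ 2) * (deriv y x) ^ 2
        - (6 * x ^ 4 * Real.cos (y x) ^ 5 + x ^ 3 * Real.sin (y x) * Real.cos (y x) ^ 3 + x)
            * (deriv y x) ^ 3)
    ↔ (∀ x ∈ I, deriv (deriv w) (ψ x) = 6 * (w (ψ x)) ^ 2 + ψ x) := by
  have hψfun : ψ = fun t => t * Real.sin (y t) := funext hψ
  have hφfun : φ = fun t => t * Real.cos (y t) := funext hφ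
  -- smoothness facts
  have hy1 : ContDiffOn ℝ ∞ (deriv y) I :=
    (hy.of_le (by exact le_rfl)).deriv_of_isOpen hI (le_of_eq (by rfl))
  have hwdiff : Differentiable ℝ w := hw.differentiable (by simp)
  have hw1 : ContDiff ℝ ∞ (deriv w) :=
    (contDiff_infty_iff_deriv.mp (hw.of_le (by simp))).2
  have hw1diff : Differentiable ℝ (deriv w) := hw1.differentiable (by simp)
  -- pointwise derivative facts on I
  have hyd : ∀ t ∈ I, DifferentiableAt ℝ y t := fun t ht =>
    (hy.contDiffAt (hI.mem_nhds ht)).differentiableAt (by simp)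
  have hy1d : ∀ t ∈ I, DifferentiableAt ℝ (deriv y) t := fun t ht =>
    (hy1.contDiffAt (hI.mem_nhds ht)).differentiableAt (by simp)
  have hsin : ∀ t ∈ I, HasDerivAt (fun u => Real.sin (y u))
      (Real.cos (y t) * deriv y t) t := fun t ht =>
    (Real.hasDerivAt_sin (y t)).comp t (hyd t ht).hasDerivAt
  have hcos : ∀ t ∈ I, HasDerivAt (fun u => Real.cos (y u))
      (-Real.sin (y t) * deriv y t) t := fun t ht =>
    (Real.hasDerivAt_cos (y t)).comp t (hyd t ht).hasDerivAt
  have hψder : ∀ t ∈ I, HasDerivAt ψ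
      (1 * Real.sin (y t) + t * (Real.cos (y t) * deriv y t)) t := by
    intro t ht
    rw [hψfun]
    exact (hasDerivAt_id t).mul (hsin t ht)
  have hφder : ∀ t ∈ I, HasDerivAt φ
      (1 * Real.cos (y t) + t * (-Real.sin (y t) * deriv y t)) t := by
    intro t ht
    rw [hφfun]
    exact (hasDerivAt_id t).mul (hcos t ht)
  -- first relation : w'(ψ t) ψ'(t) = φ'(t) on I
  have h1 : ∀ t ∈ I, deriv w (ψ t) * (1 * Real.sin (y t) + t * (Real.cos (y t) * deriv y t))
      = 1 * Real.cos (y t) + t * (-Real.sin (y t) * deriv y t) := by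
    intro t ht
    have hev : (fun u => w (ψ u)) =ᶠ[nhds t] φ := by
      filter_upwards [hI.mem_nhds ht] with u hu
      exact hwψ u hu
    have hchain : HasDerivAt (fun u => w (ψ u))
        (deriv w (ψ t) * (1 * Real.sin (y t) + t * (Real.cos (y t) * deriv y t))) t :=
      (hwdiff (ψ t)).hasDerivAt.comp t (hψder t ht)
    exact (hchain.congr_of_eventuallyEq hev.symm).unique (hφder t ht)
  -- now the pointwise equivalence
  have key : ∀ x ∈ I,
      (deriv (deriv y) x =
        -Real.sin (y x) ^ 3 * (6 * x * Real.cos (y x) ^ 2 + Real.sin (y x))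
        + (1 / x) * (-18 * x ^ 3 * Real.cos (y x) ^ 3 * Real.sin (y x) ^ 2
            - 3 * x ^ 2 * Real.sin (y x) ^ 3 * Real.cos (y x) - 2) * deriv y x
        - (18 * x ^ 3 * Real.cos (y x) ^ 4 * Real.sin (y x)
            + 3 * x ^ 2 * Real.sin (y x) ^ 2 * Real.cos (y x) ^ 2) * (deriv y x) ^ 2
        - (6 * x ^ 4 * Real.cos (y x) ^ 5 + x ^ 3 * Real.sin (y x) * Real.cos (y x) ^ 3 + x)
            * (deriv y x) ^ 3)
      ↔ deriv (deriv w) (ψ x) = 6 * (w (ψ x)) ^ 2 + ψ x := by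
    intro x hx
    have hx0 : x ≠ 0 := (hpos x hx).1.ne'
    -- second relation at x
    have hy2 : HasDerivAt (deriv y) (deriv (deriv y) x) x := (hy1d x hx).hasDerivAt
    have hprodψ : HasDerivAt (fun u => Real.cos (y u) * deriv y u)
        (-Real.sin (y x) * deriv y x * deriv y x + Real.cos (y x) * deriv (deriv y) x) x :=
      (hcos x hx).mul hy2
    have hDψfun : HasDerivAt
        (fun u => 1 * Real.sin (y u) + u * (Real.cos (y u) * deriv y u))
        (1 * (Real.cos (y x) * deriv y x)
          + (1 * (Real.cos (y x) * deriv y x)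
            + x * (-Real.sin (y x) * deriv y x * deriv y x
              + Real.cos (y x) * deriv (deriv y) x))) x :=
      (((hsin x hx).const_mul 1)).add ((hasDerivAt_id x).mul hprodψ)
    have hprodφ : HasDerivAt (fun u => -Real.sin (y u) * deriv y u)
        (-(Real.cos (y x) * deriv y x) * deriv y x + -Real.sin (y x) * deriv (deriv y) x) x :=
      ((hsin x hx).neg).mul hy2
    have hDφfun : HasDerivAt
        (fun u => 1 * Real.cos (y u) + u * (-Real.sin (y u) * deriv y u))
        (1 * (-Real.sin (y x) * deriv y x)
          + (1 * (-Real.sin (y x) * deriv y x)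
            + x * (-(Real.cos (y x) * deriv y x) * deriv y x
              + -Real.sin (y x) * deriv (deriv y) x))) x :=
      (((hcos x hx).const_mul 1)).add ((hasDerivAt_id x).mul hprodφ)
    have hchain2 : HasDerivAt (fun u => deriv w (ψ u))
        (deriv (deriv w) (ψ x)
          * (1 * Real.sin (y x) + x * (Real.cos (y x) * deriv y x))) x :=
      (hw1diff (ψ x)).hasDerivAt.comp x (hψder x hx)
    have hG : HasDerivAt
        (fun u => deriv w (ψ u) * (1 * Real.sin (y u) + u * (Real.cos (y u) * deriv y u)))
        (deriv (deriv w) (ψ x) * (1 * Real.sin (y x) + x * (Real.cos (y x) * deriv y x))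
            * (1 * Real.sin (y x) + x * (Real.cos (y x) * deriv y x))
          + deriv w (ψ x) * (1 * (Real.cos (y x) * deriv y x)
            + (1 * (Real.cos (y x) * deriv y x)
              + x * (-Real.sin (y x) * deriv y x * deriv y x
                + Real.cos (y x) * deriv (deriv y) x)))) x :=
      hchain2.mul hDψfun
    have hGev : (fun u => deriv w (ψ u)
          * (1 * Real.sin (y u) + u * (Real.cos (y u) * deriv y u)))
        =ᶠ[nhds x] (fun u => 1 * Real.cos (y u) + u * (-Real.sin (y u) * deriv y u)) := by
      filter_upwards [hI.mem_nhds hx] with t ht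
      exact h1 t ht
    have h2 := (hG.congr_of_eventuallyEq hGev.symm).unique hDφfun
    -- normalize hypotheses for keylem
    have hDne : Real.sin (y x) + x * (Real.cos (y x) * deriv y x) ≠ 0 := by
      have := hψ' x hx
      rw [(hψder x hx).deriv] at this
      rwa [one_mul] at this
    have H1 : deriv w (ψ x) * (Real.sin (y x) + x * (Real.cos (y x) * deriv y x))
        = Real.cos (y x) - x * (Real.sin (y x) * deriv y x) := by
      linear_combination h1 x hx
    have H2 : deriv (deriv w) (ψ x)
          * (Real.sin (y x) + x * (Real.cos (y x) * deriv y x)) ^ 2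
        + deriv w (ψ x) * (2 * (Real.cos (y x) * deriv y x)
          - x * (Real.sin (y x) * deriv y x ^ 2)
          + x * (Real.cos (y x) * deriv (deriv y) x))
        = -(2 * (Real.sin (y x) * deriv y x)) - x * (Real.cos (y x) * deriv y x ^ 2)
          - x * (Real.sin (y x) * deriv (deriv y) x) := by
      linear_combination h2
    have hiff := keylem x (Real.sin (y x)) (Real.cos (y x)) (deriv y x) (deriv (deriv y) x)
      (deriv w (ψ x)) (deriv (deriv w) (ψ x)) hx0 (Real.sin_sq_add_cos_sq (y x)) hDne H1 H2
    rw [hiff, hwψ x hx, hφ x, hψ x]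
  constructor
  · intro h x hx
    exact (key x hx).mp (h x hx)
  · intro h x hx
    exact (key x hx).mpr (h x hx)
end

section
/- For the Painlevé II equation (P = 2y³ + xy + a, Q = R = S = 0, A = 12y, B = 0, N = 4, Ω = 0, φ₁ = 0, φ₂ = -3/(5y), y ≠ 0), the field γ defined by γ¹ = -6BN(BP + A_x)/(5A²) + 18NBQ/(5A) + 6N(B_x + A_y)/(5A) - N_y - (12/5)NR - 2ΩB and γ² = -6N(BP + A_x)/(5A) + N_x + (6/5)NQ + 2ΩA satisfies γ¹ = 24/(5y) and γ² = 0, hence ξ = -2Ωα - γ has components ξ¹ = -24/(5y), ξ² = 0; the pseudoinvariant M = -A·ξ¹ - B·ξ² equals 288/5, and the invariant I₁ = M/N² equals 18/5. -/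
theorem pdx_eq_zero_of_forall_eq {f : ℝ → ℝ → ℝ} (g : ℝ → ℝ) (hf : ∀ x y, f x y = g y)
    (x y : ℝ) : pdx f x y = 0 := by
  simp only [pdx, hf, deriv_const]

theorem pdy_eq_zero_of_forall_eq {f : ℝ → ℝ → ℝ} (g : ℝ → ℝ) (hf : ∀ x y, f x y = g x)
    (x y : ℝ) : pdy f x y = 0 := by
  simp only [pdy, hf, deriv_const]

theorem pdy_eq_of_forall_eq_mul {f : ℝ → ℝ → ℝ} (c : ℝ) (hf : ∀ x y, f x y = c * y)
    (x y : ℝ) : pdy f x y = c := by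
  simp [pdy, hf]

theorem stmt10_general (P Q R A B N Ω γ₁ γ₂ ξ₁ ξ₂ M : ℝ → ℝ → ℝ)
    (hQ : ∀ x y, Q x y = 0)
    (hR : ∀ x y, R x y = 0)
    (hA : ∀ x y, A x y = 12 * y) (hB : ∀ x y, B x y = 0)
    (hN : ∀ x y, N x y = 4) (hΩ : ∀ x y, Ω x y = 0)
    (hγ₁ : ∀ x y, γ₁ x y = -6 * B x y * N x y * (B x y * P x y + pdx A x y) / (5 * (A x y) ^ 2)
      + 18 * N x y * B x y * Q x y / (5 * A x y)
      + 6 * N x y * (pdx B x y + pdy A x y) / (5 * A x y)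
      - pdy N x y - (12 / 5) * N x y * R x y - 2 * Ω x y * B x y)
    (hγ₂ : ∀ x y, γ₂ x y = -6 * N x y * (B x y * P x y + pdx A x y) / (5 * A x y)
      + pdx N x y + (6 / 5) * N x y * Q x y + 2 * Ω x y * A x y)
    (hξ₁ : ∀ x y, ξ₁ x y = -2 * Ω x y * B x y - γ₁ x y)
    (hξ₂ : ∀ x y, ξ₂ x y = -2 * Ω x y * (-A x y) - γ₂ x y)
    (hM : ∀ x y, M x y = -A x y * ξ₁ x y - B x y * ξ₂ x y) :
    ∀ x y : ℝ, y ≠ 0 →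
      γ₁ x y = 24 / (5 * y) ∧ γ₂ x y = 0 ∧ ξ₁ x y = -24 / (5 * y) ∧ ξ₂ x y = 0 ∧
      M x y = 288 / 5 ∧ M x y / (N x y) ^ 2 = 18 / 5 := by
  intro x y hy
  have hAx := pdx_eq_zero_of_forall_eq (fun y => 12 * y) hA x y
  have hAy := pdy_eq_of_forall_eq_mul 12 hA x y
  have hBx := pdx_eq_zero_of_forall_eq (fun _ => 0) hB x y
  have hNx := pdx_eq_zero_of_forall_eq (fun _ => 4) hN x y
  have hNy := pdy_eq_zero_of_forall_eq (fun _ => 4) hN x y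
  have hγ₁xy : γ₁ x y = 24 / (5 * y) := by
    rw [hγ₁, hAx, hAy, hBx, hNy, hA, hB, hN, hΩ, hQ, hR]
    field_simp
    ring
  have hγ₂xy : γ₂ x y = 0 := by
    rw [hγ₂, hAx, hNx, hB, hN, hΩ, hQ]
    ring
  have hξ₁xy : ξ₁ x y = -24 / (5 * y) := by
    rw [hξ₁, hγ₁xy, hΩ, hB]
    ring
  have hξ₂xy : ξ₂ x y = 0 := by
    rw [hξ₂, hγ₂xy, hΩ]
    ring
  have hMxy : M x y = 288 / 5 := by
    rw [hM, hξ₁xy, hξ₂xy, hA, hB]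
    field_simp
    ring
  refine ⟨hγ₁xy, hγ₂xy, hξ₁xy, hξ₂xy, hMxy, ?_⟩
  rw [hMxy, hN]
  norm_num

/-- for Painlevé II, γ = (24/(5y), 0), ξ = (-24/(5y), 0),
M = -Aξ¹ - Bξ² = 288/5 and I₁ = M/N² = 18/5. -/
theorem stmt10 (a : ℝ) (P Q R S A B N Ω γ₁ γ₂ ξ₁ ξ₂ M : ℝ → ℝ → ℝ)
    (hP : ∀ x y, P x y = 2 * y ^ 3 + x * y + a) (hQ : ∀ x y, Q x y = 0)
    (hR : ∀ x y, R x y = 0) (hS : ∀ x y, S x y = 0)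
    (hA : ∀ x y, A x y = 12 * y) (hB : ∀ x y, B x y = 0)
    (hN : ∀ x y, N x y = 4) (hΩ : ∀ x y, Ω x y = 0)
    (hγ₁ : ∀ x y, γ₁ x y = -6 * B x y * N x y * (B x y * P x y + pdx A x y) / (5 * (A x y) ^ 2)
      + 18 * N x y * B x y * Q x y / (5 * A x y)
      + 6 * N x y * (pdx B x y + pdy A x y) / (5 * A x y)
      - pdy N x y - (12 / 5) * N x y * R x y - 2 * Ω x y * B x y)
    (hγ₂ : ∀ x y, γ₂ x y = -6 * N x y * (B x y * P x y + pdx A x y) / (5 * A x y)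
      + pdx N x y + (6 / 5) * N x y * Q x y + 2 * Ω x y * A x y)
    (hξ₁ : ∀ x y, ξ₁ x y = -2 * Ω x y * B x y - γ₁ x y)
    (hξ₂ : ∀ x y, ξ₂ x y = -2 * Ω x y * (-A x y) - γ₂ x y)
    (hM : ∀ x y, M x y = -A x y * ξ₁ x y - B x y * ξ₂ x y) :
    ∀ x y : ℝ, y ≠ 0 →
      γ₁ x y = 24 / (5 * y) ∧ γ₂ x y = 0 ∧ ξ₁ x y = -24 / (5 * y) ∧ ξ₂ x y = 0 ∧
      M x y = 288 / 5 ∧ M x y / (N x y) ^ 2 = 18 / 5 :=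
  stmt10_general P Q R A B N Ω γ₁ γ₂ ξ₁ ξ₂ M hQ hR hA hB hN hΩ hγ₁ hγ₂ hξ₁ hξ₂ hM
end

section
/- For the Painlevé II equation with parameter a (P = 2y³ + xy + a, Q = R = S = 0, so γ¹ = 24/(5y), γ² = 0, M = 288/5, y ≠ 0), the pseudoinvariant Γ = [γ¹γ²(γ¹_x - γ²_y) + (γ²)²γ¹_y - (γ¹)²γ²_x + P(γ¹)³ + 3Q(γ¹)²γ² + 3Rγ¹(γ²)² + S(γ²)³]/M equals (48/25)·(2y³ + xy + a)/y³, and therefore the invariant I₃ = Γ/M equals (2y³ + xy + a)/(30y³). -/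
/-- for Painlevé II, Γ = (48/25)(2y³ + xy + a)/y³ and
I₃ = Γ/M = (2y³ + xy + a)/(30y³). -/
theorem stmt11 (a : ℝ) (P Q R S γ₁ γ₂ M Γ : ℝ → ℝ → ℝ)
    (hP : ∀ x y, P x y = 2 * y ^ 3 + x * y + a) (hQ : ∀ x y, Q x y = 0)
    (hR : ∀ x y, R x y = 0) (hS : ∀ x y, S x y = 0)
    (hγ₁ : ∀ x y, γ₁ x y = 24 / (5 * y)) (hγ₂ : ∀ x y, γ₂ x y = 0)
    (hM : ∀ x y, M x y = 288 / 5)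
    (hΓ : ∀ x y, Γ x y = (γ₁ x y * γ₂ x y * (pdx γ₁ x y - pdy γ₂ x y)
      + (γ₂ x y) ^ 2 * pdy γ₁ x y - (γ₁ x y) ^ 2 * pdx γ₂ x y
      + P x y * (γ₁ x y) ^ 3 + 3 * Q x y * (γ₁ x y) ^ 2 * γ₂ x y
      + 3 * R x y * γ₁ x y * (γ₂ x y) ^ 2 + S x y * (γ₂ x y) ^ 3) / M x y) :
    ∀ x y : ℝ, y ≠ 0 →
      Γ x y = (48 / 25) * (2 * y ^ 3 + x * y + a) / y ^ 3 ∧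
      Γ x y / M x y = (2 * y ^ 3 + x * y + a) / (30 * y ^ 3) := by
  intro x y hy
  have hdx1 : pdx γ₂ x y = 0 := by
    unfold pdx; simp [hγ₂]
  have hdy2 : pdy γ₂ x y = 0 := by
    unfold pdy; simp [hγ₂]
  have hG : Γ x y = (48 / 25) * (2 * y ^ 3 + x * y + a) / y ^ 3 := by
    rw [hΓ, hP, hQ, hR, hS, hγ₁, hγ₂, hM, hdx1, hdy2]
    field_simp
    ring
  exact ⟨hG, by rw [hG, hM]; field_simp; ring⟩
end

section
/- For the Painlevé II equation with parameter a and y > 0, with A = 12y, B = 0, N = 4, ξ¹ = -24/(5y), ξ² = 0 and I₃ = (2y³ + xy + a)/(30y³), the invariants I₆ = (B·(I₃)_x - A·(I₃)_y)/N and I₉ = (ξ¹·(I₃)_x + ξ²·(I₃)_y)²/N³ satisfy I₆ = (2xy + 3a)/(10y³) and I₉ = 1/(2500y⁶); consequently J = (1/50)·(4 + 10I₆ - 60I₃)/√I₉ = a. -/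
noncomputable def painleveI₃ (a x y : ℝ) : ℝ := (2 * y ^ 3 + x * y + a) / (30 * y ^ 3)

lemma pdx_painleveI₃ (a x : ℝ) {y : ℝ} (hy : y ≠ 0) :
    pdx (painleveI₃ a) x y = 1 / (30 * y ^ 2) := by
  have h : HasDerivAt (fun t => painleveI₃ a t y) (y / (30 * y ^ 3)) x := by
    have hnum : HasDerivAt (fun t : ℝ => 2 * y ^ 3 + t * y + a) y x := by
      simpa using (((hasDerivAt_id x).mul_const y).const_add (2 * y ^ 3)).add_const a
    exact hnum.div_const _
  rw [pdx, h.deriv]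
  field_simp

lemma pdy_painleveI₃ (a x : ℝ) {y : ℝ} (hy : y ≠ 0) :
    pdy (painleveI₃ a) x y = -(2 * x * y + 3 * a) / (30 * y ^ 4) := by
  have hcube : HasDerivAt (fun t : ℝ => t ^ 3) (3 * y ^ 2) y := by
    simpa using hasDerivAt_pow 3 y
  have hnum : HasDerivAt (fun t : ℝ => 2 * t ^ 3 + x * t + a) (2 * (3 * y ^ 2) + x) y := by
    simpa using ((hcube.const_mul 2).add ((hasDerivAt_id y).const_mul x)).add_const a
  have h : HasDerivAt (fun t => painleveI₃ a x t) _ y :=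
    hnum.div (hcube.const_mul 30) (by positivity)
  rw [pdy, h.deriv]
  field_simp
  ring

/-- for Painlevé II with y > 0, I₆ = (2xy + 3a)/(10y³), I₉ = 1/(2500y⁶),
and J = (1/50)(4 + 10I₆ - 60I₃)/√I₉ = a. -/
theorem stmt12 (a : ℝ) (A B N ξ₁ ξ₂ I₃ I₆ I₉ : ℝ → ℝ → ℝ)
    (hA : ∀ x y, A x y = 12 * y) (hB : ∀ x y, B x y = 0)
    (hN : ∀ x y, N x y = 4)
    (hξ₁ : ∀ x y, ξ₁ x y = -24 / (5 * y)) (hξ₂ : ∀ x y, ξ₂ x y = 0)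
    (hI₃ : ∀ x y, I₃ x y = (2 * y ^ 3 + x * y + a) / (30 * y ^ 3))
    (hI₆ : ∀ x y, I₆ x y = (B x y * pdx I₃ x y - A x y * pdy I₃ x y) / N x y)
    (hI₉ : ∀ x y, I₉ x y = (ξ₁ x y * pdx I₃ x y + ξ₂ x y * pdy I₃ x y) ^ 2 / (N x y) ^ 3) :
    ∀ x y : ℝ, 0 < y →
      I₆ x y = (2 * x * y + 3 * a) / (10 * y ^ 3) ∧
      I₉ x y = 1 / (2500 * y ^ 6) ∧
      (1 / 50) * (4 + 10 * I₆ x y - 60 * I₃ x y) / Real.sqrt (I₉ x y) = a := by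
  intro x y hy
  have hI₃_eq : I₃ = painleveI₃ a := funext₂ hI₃
  have h6 : I₆ x y = (2 * x * y + 3 * a) / (10 * y ^ 3) := by
    rw [hI₆, hB, hA, hN, hI₃_eq, pdy_painleveI₃ a x hy.ne']
    field_simp
    ring
  have h9 : I₉ x y = 1 / (2500 * y ^ 6) := by
    rw [hI₉, hξ₁, hξ₂, hN, hI₃_eq, pdx_painleveI₃ a x hy.ne']
    field_simp
    ring
  have hsqrt : Real.sqrt (I₉ x y) = 1 / (50 * y ^ 3) := by
    rw [h9, show 1 / (2500 * y ^ 6) = (1 / (50 * y ^ 3)) ^ 2 by ring, Real.sqrt_sq (by positivity)]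
  refine ⟨h6, h9, ?_⟩
  rw [hsqrt, h6, hI₃]
  field_simp
  ring
end
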